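/- For every $r$ with $0 < r \leq \frac{\log 3}{2}$, one has $e^{\pi\sqrt{3} - \pi/\sinh(r)} \leq 3\sinh^2(r)$, with equality at $r = \frac{\log 3}{2}$ (where $\sinh(\frac{\log 3}{2}) = \frac{1}{\sqrt 3}$). Equivalently, the function $F(r) = \frac{e^{\pi\sqrt 3}\, C\big(\frac{\log 3}{2}\big)\, e^{-\pi/\sinh(r)}}{3\sinh^2(r)}$ satisfies $F(r) \leq C\big(\frac{\log 3}{2}\big)$ for all $0 < r \leq \frac{\log 3}{2}$. -/

import Mathlib

open Real

/-- Teo's function `C(r) = ((4π/3)(1 - sech⁶(r/2)))^{-1/2}`. -/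
noncomputable def TeoC (r : ℝ) : ℝ :=
  (Real.sqrt (4 * π / 3 * (1 - (1 / Real.cosh (r / 2)) ^ 6)))⁻¹

/-- The collar bound from Part (3) of Proposition 3.3. -/
noncomputable def F (r : ℝ) : ℝ :=
  Real.exp (π * Real.sqrt 3) * TeoC (Real.log 3 / 2) * Real.exp (-π / Real.sinh r)
    / (3 * Real.sinh r ^ 2)

/-!
Put `u = √3 sinh r ∈ (0, 1]`. Then `π√3 - π / sinh r = π√3 (1 - u⁻¹)` and `3 sinh² r = u²`, so
the inequality reads `π√3 (1 - u⁻¹) ≤ 2 log u`. Since `1 - u⁻¹ ≤ 0`, this follows from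
`π√3 ≥ 2` and `1 - u⁻¹ ≤ log u`.
-/

theorem Real.exp_mul_one_sub_inv_le_pow {c u : ℝ} {n : ℕ} (hn : (n : ℝ) ≤ c) (hu₀ : 0 < u)
    (hu₁ : u ≤ 1) : exp (c * (1 - u⁻¹)) ≤ u ^ n := by
  rw [← le_log_iff_exp_le (pow_pos hu₀ n), log_pow]
  have hneg : 1 - u⁻¹ ≤ 0 := by
    rw [sub_nonpos]
    exact one_le_inv_iff₀.2 ⟨hu₀, hu₁⟩
  calc c * (1 - u⁻¹) ≤ n * (1 - u⁻¹) := mul_le_mul_of_nonpos_right hn hneg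
    _ ≤ n * log u := by gcongr; exact one_sub_inv_le_log_of_pos hu₀

theorem Real.sinh_log_three_div_two : sinh (log 3 / 2) = (√3)⁻¹ := by
  have h3 : (0 : ℝ) < √3 := by positivity
  rw [← log_sqrt (by norm_num), sinh_log h3]
  field_simp
  norm_num

theorem exp_pi_sqrt_three_sub_le {s : ℝ} (hs₀ : 0 < s) (hs₁ : s ≤ (√3)⁻¹) :
    exp (π * √3 - π / s) ≤ 3 * s ^ 2 := by
  have h3 : (0 : ℝ) < √3 := by positivity
  have hu₁ : √3 * s ≤ 1 :=
    calc √3 * s ≤ √3 * (√3)⁻¹ := by gcongr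
      _ = 1 := mul_inv_cancel₀ h3.ne'
  have hc : ((2 : ℕ) : ℝ) ≤ π * √3 := by
    have : (1 : ℝ) ≤ √3 := one_le_sqrt.2 (by norm_num)
    push_cast
    nlinarith [pi_gt_three]
  have key := exp_mul_one_sub_inv_le_pow hc (by positivity) hu₁
  convert key using 2
  · field_simp
  · rw [mul_pow, sq_sqrt (by norm_num)]

theorem exp_pi_sqrt_three_sub_le_of_le {r : ℝ} (hr₀ : 0 < r) (hr₁ : r ≤ log 3 / 2) :
    exp (π * √3 - π / sinh r) ≤ 3 * sinh r ^ 2 :=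
  exp_pi_sqrt_three_sub_le (sinh_pos_iff.2 hr₀)
    (sinh_log_three_div_two ▸ sinh_le_sinh.2 hr₁)

theorem F_eq_TeoC_mul (r : ℝ) :
    F r = TeoC (log 3 / 2) * (exp (π * √3 - π / sinh r) / (3 * sinh r ^ 2)) := by
  rw [F, sub_eq_add_neg, neg_div, ← neg_div, exp_add]
  ring

theorem TeoC_nonneg (r : ℝ) : 0 ≤ TeoC r := by
  unfold TeoC
  positivity

/-- For `0 < r ≤ (log 3)/2` one has `e^{π√3 - π/sinh r} ≤ 3 sinh² r`, with equality
at `r = (log 3)/2`; equivalently `F(r) ≤ C((log 3)/2)` on this interval. -/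
theorem F_le_TeoC :
    (∀ r : ℝ, 0 < r → r ≤ Real.log 3 / 2 →
      Real.exp (π * Real.sqrt 3 - π / Real.sinh r) ≤ 3 * Real.sinh r ^ 2) ∧
    Real.exp (π * Real.sqrt 3 - π / Real.sinh (Real.log 3 / 2))
      = 3 * Real.sinh (Real.log 3 / 2) ^ 2 ∧
    ∀ r : ℝ, 0 < r → r ≤ Real.log 3 / 2 → F r ≤ TeoC (Real.log 3 / 2) := by
  refine ⟨fun r hr₀ hr₁ => exp_pi_sqrt_three_sub_le_of_le hr₀ hr₁, ?_, fun r hr₀ hr₁ => ?_⟩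
  · rw [sinh_log_three_div_two, div_inv_eq_mul, sub_self, exp_zero, inv_pow,
      sq_sqrt (by norm_num)]
    norm_num
  · have hden : 0 < 3 * sinh r ^ 2 := by have := sinh_pos_iff.2 hr₀; positivity
    rw [F_eq_TeoC_mul]
    exact mul_le_of_le_one_right (TeoC_nonneg _)
      ((div_le_one hden).2 (exp_pi_sqrt_three_sub_le_of_le hr₀ hr₁))
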